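/- Let G be a finitely generated group with a free abelian normal subgroup A of finite index. Then every element of G is generalized torsion if and only if the abelianization G^{ab} is finite. -/

import Mathlib

/-!
A product of `k` conjugates of `g` maps to `g ^ k` in `G^{ab}`, so if every element is
generalized torsion then `G^{ab}` is a finitely generated torsion abelian group, hence finite.

Conversely, if `G^{ab}` is finite, the transfer `G → A` factors through it and lands in the
torsion-free group `A ≅ ℤⁿ`, so it is trivial. Since `A` is normal, the transfer of `a ∈ A` is
the norm `∏_q q⁻¹ a q` over coset representatives `q`; for `a = g ^ [G : A]` this writes `1`
as a nonempty product of conjugates of `g`.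
-/

/-- `g` is a generalized torsion element of `G`: some nonempty finite product of
conjugates of `g` equals the identity. -/
def IsGenTorsion {G : Type*} [Group G] (g : G) : Prop :=
  ∃ xs : List G, xs ≠ [] ∧ (xs.map (fun x => x⁻¹ * g * x)).prod = 1

section GenTorsion

variable {G : Type*} [Group G]

lemma IsGenTorsion.of_prod_conj_pow_eq_one {g : G} {m : ℕ} (hm : m ≠ 0) {xs : List G}
    (hxs : xs ≠ []) (h : (xs.map fun x ↦ x⁻¹ * g ^ m * x).prod = 1) : IsGenTorsion g := by
  refine ⟨xs.flatMap (List.replicate m), by simpa [List.flatMap_eq_nil_iff, hm,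
    List.eq_nil_iff_forall_not_mem] using hxs, ?_⟩
  rw [← h, List.map_flatMap, List.flatMap_def, List.prod_flatten, List.map_map]
  congr 1
  refine List.map_congr_left fun x _ ↦ ?_
  simpa using conj_pow (a := x⁻¹) (b := g) (i := m)

lemma IsGenTorsion.isOfFinOrder_of {g : G} (hg : IsGenTorsion g) :
    IsOfFinOrder (Abelianization.of g) := by
  obtain ⟨xs, hxs, h⟩ := hg
  refine isOfFinOrder_iff_pow_eq_one.mpr ⟨xs.length, List.length_pos_iff_ne_nil.mpr hxs, ?_⟩
  simpa [map_list_prod, Function.comp_def] using congrArg Abelianization.of h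

lemma finite_abelianization_of_forall_isGenTorsion [Group.FG G] (h : ∀ g : G, IsGenTorsion g) :
    Finite (Abelianization G) := by
  have hsurj := QuotientGroup.mk'_surjective (commutator G)
  have : Group.FG (Abelianization G) := Group.fg_of_surjective hsurj
  refine CommGroup.finite_of_fg_isMulTorsion _ fun a ↦ ?_
  obtain ⟨g, rfl⟩ := hsurj a
  exact (h g).isOfFinOrder_of

end GenTorsion

section Transfer

open Subgroup

variable {G A : Type*} [Group G] [CommGroup A] {H : Subgroup G}

lemma QuotientGroup.smul_eq_self_of_mem_normal [H.Normal] {a : G} (ha : a ∈ H) (q : G ⧸ H) :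
    a • q = q := by
  induction q using QuotientGroup.induction_on with
  | H x =>
    change ((a * x : G) : G ⧸ H) = x
    rw [QuotientGroup.eq]
    simpa [mul_assoc] using ‹H.Normal›.conj_mem _ (inv_mem ha) x⁻¹

lemma MonoidHom.transfer_apply_of_mem_normal [H.Normal] [H.FiniteIndex] [Fintype (G ⧸ H)]
    (ϕ : H →* A) {a : G} (ha : a ∈ H) :
    ϕ.transfer a = ∏ q : G ⧸ H,
      ϕ ⟨q.out⁻¹ * a * q.out, by simpa using ‹H.Normal›.conj_mem a ha q.out⁻¹⟩ := by
  let T : H.LeftTransversal :=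
    ⟨Set.range Quotient.out, isComplement_range_left QuotientGroup.out_eq'⟩
  have hT (q : G ⧸ H) : (T.2.leftQuotientEquiv q : G) = q.out :=
    IsComplement.leftQuotientEquiv_apply QuotientGroup.out_eq' q
  rw [transfer_def ϕ T, leftTransversals.diff]
  refine Finset.prod_congr (by congr; exact Subsingleton.elim _ _) fun q _ ↦ congrArg ϕ ?_
  ext
  dsimp only
  -- `a` fixes every coset, so `a • T` picks `a * q.out` from the coset `q`
  rw [smul_apply_eq_smul_apply_inv_smul, QuotientGroup.smul_eq_self_of_mem_normal (inv_mem ha),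
    hT, smul_eq_mul, mul_assoc]

lemma MonoidHom.apply_eq_one_of_finite_abelianization [Finite (Abelianization G)]
    [IsMulTorsionFree A] (f : G →* A) (g : G) : f g = 1 := by
  simpa using ((Abelianization.lift f).isOfFinOrder (isOfFinOrder_of_finite (.of g))).eq_one'

lemma prod_conj_out_eq_one_of_finite_abelianization [Finite (Abelianization G)] [H.Normal]
    [H.FiniteIndex] [Fintype (G ⧸ H)] [IsMulTorsionFree A] {ϕ : H →* A}
    (hϕ : Function.Injective ϕ) {a : G} (ha : a ∈ H) :
    (((Finset.univ : Finset (G ⧸ H)).toList.map fun q ↦ q.out).map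
      fun x ↦ x⁻¹ * a * x).prod = 1 := by
  have hconj (q : G ⧸ H) : q.out⁻¹ * a * q.out ∈ H := by
    simpa using ‹H.Normal›.conj_mem a ha q.out⁻¹
  let norm : H := ((Finset.univ : Finset (G ⧸ H)).toList.map fun q ↦ ⟨_, hconj q⟩).prod
  have hnorm : ϕ norm = 1 := by
    rw [map_list_prod, List.map_map, Function.comp_def, Finset.prod_map_toList,
      ← ϕ.transfer_apply_of_mem_normal ha, ϕ.transfer.apply_eq_one_of_finite_abelianization]
  have := congrArg Subtype.val (hϕ (hnorm.trans ϕ.map_one.symm))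
  simpa [norm, Subgroup.val_list_prod, List.map_map, Function.comp_def] using this

end Transfer

theorem genTorsion_all_iff_finite_abelianization {G : Type*} [Group G] [Group.FG G]
    (A : Subgroup G) [A.Normal] (hfin : A.index ≠ 0)
    (hfree : ∃ n : ℕ, Nonempty (A ≃* Multiplicative (Fin n → ℤ))) :
    (∀ g : G, IsGenTorsion g) ↔ Finite (Abelianization G) := by
  refine ⟨finite_abelianization_of_forall_isGenTorsion, fun _ g ↦ ?_⟩
  obtain ⟨n, ⟨e⟩⟩ := hfree
  have : A.FiniteIndex := ⟨hfin⟩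
  let := A.fintypeQuotientOfFiniteIndex
  have hnorm := prod_conj_out_eq_one_of_finite_abelianization (ϕ := e.toMonoidHom)
    e.injective (A.pow_index_mem g)
  refine IsGenTorsion.of_prod_conj_pow_eq_one hfin ?_ hnorm
  simp [Finset.univ_nonempty.ne_empty]
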